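/- Let x(t) be the solution of ẏ = f(y) + q·B·y and x_λ(t) the solution of ẋ = f(x) + p(t/λ)·B·x with the same initial condition, where f is L-Lipschitz, ‖B‖ ≤ b, p is bounded by P̄, T_0-periodic with mean q, and all solutions stay in a ball of radius R on [0,T]. Then for t ∈ [0,T], ‖x_λ(t) − x(t)‖ ≤ C·λ for a constant C depending only on L, b, P̄, R, T, T_0 (first-order averaging estimate). -/

import Mathlib

/-!
The difference `u = x_λ - x` satisfies
`u' = (f x_λ - f x + q • B (x_λ - x)) + (p (t / λ) - q) • B x_λ`,
where the first bracket has norm at most `(L + P̄ b) ‖u‖`. By Grönwall's inequality in integral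
form it therefore suffices to show that the oscillatory integral
`∫₀ʷ (p (s / λ) - q) • B x_λ(s) ds` is `O(λ)` uniformly in `w ∈ [0, T]`.

Since `x_λ` is Lipschitz, `B x_λ` varies by `O(λ)` on each window of length `λ T₀`, and
`p (· / λ) - q` has mean zero on every such window; cutting `[0, w]` into windows gives `O(λ)`.
The mean-zero property is a statement about the integral of `p`, so `p` must first be shown
measurable. If `B x_λ` has no zero on some full window, then `p (s / λ)` is the coefficient of the nonzero vector `B x_λ(s)` in `x_λ' - f x_λ` there, hence
measurable on that window and, by periodicity, everywhere. Otherwise `B x_λ` vanishes somewhere in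
every window, so it is itself `O(λ)` and the estimate is immediate.
-/

open intervalIntegral

open Set MeasureTheory Real

theorem le_mul_exp_of_le_add_integral {u : ℝ → ℝ} {ε K T : ℝ} (hu : ContinuousOn u (Icc 0 T))
    (hK : 0 ≤ K) (h : ∀ t ∈ Icc 0 T, u t ≤ ε + K * ∫ s in 0..t, u s) :
    ∀ t ∈ Icc 0 T, u t ≤ ε * exp (K * t) := by
  intro t ht
  have hT : 0 ≤ T := ht.1.trans ht.2
  set ū : ℝ → ℝ := fun s => u (projIcc 0 T hT s)
  have hū : Continuous ū := hu.comp_continuous (continuous_subtype_val.comp continuous_projIcc)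
    fun s => (projIcc 0 T hT s).2
  have hūu : EqOn ū u (Icc 0 T) := fun s hs => by simp only [ū, projIcc_of_mem hT hs]
  have hint : ∀ t ∈ Icc 0 T, ∫ s in 0..t, ū s = ∫ s in 0..t, u s := fun t ht =>
    integral_congr (hūu.mono (uIcc_subset_Icc ⟨le_rfl, ht.1.trans ht.2⟩ ht))
  set U : ℝ → ℝ := fun t => ε + K * ∫ s in 0..t, ū s
  have hU : ∀ t, HasDerivAt U (K * ū t) t := fun t =>
    ((hū.integral_hasStrictDerivAt 0 t).hasDerivAt.const_mul K).const_add ε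
  have hUt := le_gronwallBound_of_liminf_deriv_right_le (f := U) (δ := ε) (ε := 0)
    (continuous_iff_continuousAt.2 fun t => (hU t).continuousAt).continuousOn
    (fun t _ r hr => (hU t).hasDerivWithinAt.liminf_right_slope_le hr) (by simp [U])
    (fun s hs => by
      have hs' := Ico_subset_Icc_self hs
      simpa [U, hūu hs', hint s hs'] using mul_le_mul_of_nonneg_left (h s hs') hK) t ht
  rw [gronwallBound_ε0, sub_zero] at hUt
  simp only [U, hint t ht] at hUt
  exact (h t ht).trans hUt

theorem abs_le_of_mean_eq {p : ℝ → ℝ} {P q T0 : ℝ} (hT0 : 0 < T0) (hp : ∀ t, |p t| ≤ P)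
    (hmean : (1 / T0) * ∫ τ in (0:ℝ)..T0, p τ = q) : |q| ≤ P := by
  have h := intervalIntegral.norm_integral_le_of_norm_le_const (a := 0) (b := T0) (C := P)
    fun τ _ => (Real.norm_eq_abs _).trans_le (hp τ)
  rw [Real.norm_eq_abs, sub_zero, abs_of_pos hT0] at h
  rw [← hmean, abs_mul, abs_of_pos (one_div_pos.2 hT0), one_div, inv_mul_le_iff₀ hT0]
  linarith

theorem Measurable.intervalIntegrable_of_abs_le {φ : ℝ → ℝ} {M : ℝ} (hφm : Measurable φ)
    (hφM : ∀ s, |φ s| ≤ M) (a b : ℝ) : IntervalIntegrable φ volume a b :=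
  intervalIntegrable_const.mono_fun' hφm.aestronglyMeasurable
    (ae_of_all _ fun s => (Real.norm_eq_abs _).trans_le (hφM s))

theorem Function.Periodic.measurable_of_eqOn {β : Type*} [MeasurableSpace β] {f g : ℝ → β}
    {c a : ℝ} (hf : Function.Periodic f c) (hc : 0 < c) (hg : Measurable g)
    (hfg : EqOn f g (Ico a (a + c))) : Measurable f := by
  have hf_eq : f = g ∘ toIcoMod hc a := funext fun x => by
    rw [Function.comp_apply, ← hfg (toIcoMod_mem_Ico hc a x), ← self_sub_toIcoDiv_zsmul,
      hf.sub_zsmul_eq]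
  rw [hf_eq, funext (toIcoMod_eq_add_fract_mul hc a)]
  fun_prop

section

variable {F : Type*} [NormedAddCommGroup F]

theorem norm_le_of_forall_exists_zero {v : ℝ → F} {c Λ T : ℝ} (hΛ : 0 ≤ Λ) (hc : 0 ≤ c)
    (hcT : c ≤ T)
    (hvΛ : ∀ s ∈ Icc 0 T, ∀ s' ∈ Icc 0 T, ‖v s - v s'‖ ≤ Λ * |s - s'|)
    (hzero : ∀ a, Icc a (a + c) ⊆ Icc 0 T → ∃ s ∈ Icc a (a + c), v s = 0) :
    ∀ s ∈ Icc 0 T, ‖v s‖ ≤ Λ * c := by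
  intro s hs
  set a := min s (T - c)
  have hsa : s ∈ Icc a (a + c) := by
    refine ⟨min_le_left _ _, ?_⟩
    rcases le_total s (T - c) with h | h
    · simp only [a, min_eq_left h]; linarith
    · simp only [a, min_eq_right h]; linarith [hs.2]
  have hwin : Icc a (a + c) ⊆ Icc 0 T :=
    Icc_subset_Icc (le_min hs.1 (by linarith)) (by linarith [min_le_right s (T - c)])
  obtain ⟨s₀, hs₀, hvs₀⟩ := hzero a hwin
  calc ‖v s‖ = ‖v s - v s₀‖ := by rw [hvs₀, sub_zero]
    _ ≤ Λ * |s - s₀| := hvΛ s hs s₀ (hwin hs₀)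
    _ ≤ Λ * c := by
      gcongr
      rw [abs_sub_le_iff]
      constructor <;> linarith [hs₀.1, hs₀.2, hsa.1, hsa.2]

variable [NormedSpace ℝ F]

-- A measurable formula (by polarization) for the coefficient `c` in `w = c • v`.
noncomputable def smulCoeff (v w : F) : ℝ := (‖w + v‖ ^ 2 - ‖w - v‖ ^ 2) / (4 * ‖v‖ ^ 2)

theorem smulCoeff_smul_self {v : F} (hv : v ≠ 0) (c : ℝ) : smulCoeff v (c • v) = c := by
  have hv' : ‖v‖ ≠ 0 := norm_ne_zero_iff.2 hv
  have hadd : c • v + v = (c + 1) • v := by rw [add_smul, one_smul]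
  have hsub : c • v - v = (c - 1) • v := by rw [sub_smul, one_smul]
  rw [smulCoeff, hadd, hsub, norm_smul, norm_smul, mul_pow, mul_pow,
    Real.norm_eq_abs, Real.norm_eq_abs, sq_abs, sq_abs]
  field_simp
  ring

theorem norm_integral_smul_le_of_forall_exists_zero {φ : ℝ → ℝ} {v : ℝ → F}
    {c M Λ V T : ℝ} (hΛ : 0 ≤ Λ) (hc : 0 ≤ c) (hφM : ∀ s, |φ s| ≤ M)
    (hvΛ : ∀ s ∈ Icc 0 T, ∀ s' ∈ Icc 0 T, ‖v s - v s'‖ ≤ Λ * |s - s'|)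
    (hvV : ∀ s ∈ Icc 0 T, ‖v s‖ ≤ V)
    (hzero : ∀ a, Icc a (a + c) ⊆ Icc 0 T → ∃ s ∈ Icc a (a + c), v s = 0) :
    ∀ w ∈ Icc 0 T, ‖∫ s in 0..w, φ s • v s‖ ≤ M * c * (Λ * w + V) := by
  intro w hw
  have hM : 0 ≤ M := (abs_nonneg _).trans (hφM 0)
  have hV : 0 ≤ V := (norm_nonneg _).trans (hvV w hw)
  have hbound : ∀ V', (∀ s ∈ Icc 0 T, ‖v s‖ ≤ V') → ‖∫ s in 0..w, φ s • v s‖ ≤ M * V' * w :=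
    fun V' hV' => by
      refine (intervalIntegral.norm_integral_le_of_norm_le_const fun s hs => ?_).trans_eq
        (by rw [sub_zero, abs_of_nonneg hw.1])
      rw [uIoc_of_le hw.1] at hs
      rw [norm_smul, Real.norm_eq_abs]
      exact mul_le_mul (hφM s) (hV' s ⟨hs.1.le, hs.2.trans hw.2⟩) (norm_nonneg _) hM
  rcases le_or_gt c T with hcT | hTc
  · calc _ ≤ M * (Λ * c) * w := hbound _ (norm_le_of_forall_exists_zero hΛ hc hcT hvΛ hzero)
      _ ≤ M * c * (Λ * w + V) := by
        rw [mul_add]; nlinarith [mul_nonneg (mul_nonneg hM hc) hV]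
  · calc _ ≤ M * V * w := hbound V hvV
      _ ≤ M * V * c := by gcongr; linarith [hw.2]
      _ ≤ M * c * (Λ * w + V) := by
        rw [mul_add]; nlinarith [mul_nonneg (mul_nonneg (mul_nonneg hM hc) hΛ) hw.1]

variable [CompleteSpace F]

theorem norm_le_mul_exp_of_hasDerivAt_add {u a g : ℝ → F} {K ε G T : ℝ}
    (hK : 0 ≤ K) (hu0 : u 0 = 0) (hu : ∀ s ∈ Icc 0 T, HasDerivAt u (a s + g s) s)
    (ha : ContinuousOn a (Icc 0 T)) (haK : ∀ s ∈ Icc 0 T, ‖a s‖ ≤ K * ‖u s‖)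
    (hgG : ∀ s ∈ Icc 0 T, ‖g s‖ ≤ G) (hgε : ∀ t ∈ Icc 0 T, ‖∫ s in 0..t, g s‖ ≤ ε) :
    ∀ t ∈ Icc 0 T, ‖u t‖ ≤ ε * exp (K * t) := by
  have huc : ContinuousOn u (Icc 0 T) := fun s hs => (hu s hs).continuousAt.continuousWithinAt
  -- `g` is measurable as a derivative minus a continuous function
  have hgm : AEStronglyMeasurable g (volume.restrict (Icc 0 T)) :=
    ((stronglyMeasurable_deriv u).aestronglyMeasurable.sub
      (ha.aestronglyMeasurable measurableSet_Icc)).congr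
      ((ae_restrict_mem measurableSet_Icc).mono fun s hs => by simp [(hu s hs).deriv])
  refine le_mul_exp_of_le_add_integral huc.norm hK fun t ht => ?_
  have hsub : uIoc 0 t ⊆ Icc 0 T := by
    rw [uIoc_of_le ht.1]; exact Ioc_subset_Icc_self.trans (Icc_subset_Icc_right ht.2)
  have hsub' : uIcc 0 t ⊆ Icc 0 T := uIcc_subset_Icc ⟨le_rfl, ht.1.trans ht.2⟩ ht
  have hgi : IntervalIntegrable g volume 0 t :=
    intervalIntegrable_const.mono_fun' (hgm.mono_set hsub)
      ((ae_restrict_mem measurableSet_uIoc).mono fun s hs => hgG s (hsub hs))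
  have hai : IntervalIntegrable a volume 0 t := (ha.mono hsub').intervalIntegrable
  have hFTC : u t = (∫ s in 0..t, a s) + ∫ s in 0..t, g s := by
    rw [← integral_add hai hgi, integral_eq_sub_of_hasDerivAt
      (fun s hs => hu s (hsub' hs)) (hai.add hgi), hu0, sub_zero]
  calc ‖u t‖ ≤ ‖∫ s in 0..t, a s‖ + ‖∫ s in 0..t, g s‖ := hFTC ▸ norm_add_le _ _
    _ ≤ (∫ s in 0..t, K * ‖u s‖) + ε := by
      refine add_le_add ((intervalIntegral.norm_integral_le_integral_norm ht.1).trans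
        (integral_mono_on ht.1 (ha.mono hsub').norm.intervalIntegrable
          ((huc.mono hsub').norm.const_smul K).intervalIntegrable fun s hs => ?_)) (hgε t ht)
      exact haK s (hsub' (by rwa [uIcc_of_le ht.1]))
    _ = ε + K * ∫ s in 0..t, ‖u s‖ := by rw [intervalIntegral.integral_const_mul, add_comm]

theorem exists_measurable_eqOn_of_hasDerivAt_add_smul {y a v : ℝ → F}
    {φ : ℝ → ℝ} {l u : ℝ} (hlu : l ≤ u) (ha : ContinuousOn a (Icc l u))
    (hv : ContinuousOn v (Icc l u)) (hy : ∀ s ∈ Icc l u, HasDerivAt y (a s + φ s • v s) s)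
    (hv0 : ∀ s ∈ Icc l u, v s ≠ 0) : ∃ r : ℝ → ℝ, Measurable r ∧ EqOn φ r (Icc l u) := by
  set clamp : ℝ → ℝ := fun s => projIcc l u hlu s
  have hclamp : Continuous clamp := continuous_subtype_val.comp continuous_projIcc
  have hclampmem : ∀ s, clamp s ∈ Icc l u := fun s => (projIcc l u hlu s).2
  have hclampeq : ∀ s ∈ Icc l u, clamp s = s := fun s hs => by simp [clamp, projIcc_of_mem hlu hs]
  refine ⟨fun s => smulCoeff (v (clamp s)) (deriv y s - a (clamp s)), ?_, fun s hs => ?_⟩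
  · have hv' : StronglyMeasurable fun s => v (clamp s) :=
      (hv.comp_continuous hclamp hclampmem).stronglyMeasurable
    have hw : StronglyMeasurable fun s => deriv y s - a (clamp s) :=
      (stronglyMeasurable_deriv y).sub (ha.comp_continuous hclamp hclampmem).stronglyMeasurable
    exact (((hw.add hv').norm.measurable.pow_const 2).sub
      ((hw.sub hv').norm.measurable.pow_const 2)).div
      ((hv'.norm.measurable.pow_const 2).const_mul 4)
  · simp only [hclampeq s hs, (hy s hs).deriv, add_sub_cancel_left, smulCoeff_smul_self (hv0 s hs)]

theorem norm_integral_smul_le_of_integral_eq_zero {φ : ℝ → ℝ} {v : ℝ → F}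
    {a b M δ : ℝ} (hab : a ≤ b) (hφ : IntervalIntegrable φ volume a b) (hφM : ∀ s, |φ s| ≤ M)
    (hφ0 : ∫ s in a..b, φ s = 0) (hv : ContinuousOn v (Icc a b))
    (hvδ : ∀ s ∈ Icc a b, ‖v s - v a‖ ≤ δ) :
    ‖∫ s in a..b, φ s • v s‖ ≤ M * δ * (b - a) := by
  have hint : IntervalIntegrable (fun s => φ s • (v s - v a)) volume a b :=
    hφ.smul_continuousOn ((hv.sub continuousOn_const).mono (uIcc_of_le hab).subset)
  have hsplit : ∫ s in a..b, φ s • v s = ∫ s in a..b, φ s • (v s - v a) := by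
    rw [← add_zero (∫ s in a..b, φ s • (v s - v a)), ← zero_smul ℝ (v a), ← hφ0,
      ← intervalIntegral.integral_smul_const,
      ← intervalIntegral.integral_add hint (hφ.smul_continuousOn continuousOn_const)]
    simp_rw [← smul_add, sub_add_cancel]
  rw [hsplit, ← abs_of_nonneg (sub_nonneg.2 hab)]
  refine intervalIntegral.norm_integral_le_of_norm_le_const fun s hs => ?_
  rw [uIoc_of_le hab] at hs
  rw [norm_smul, Real.norm_eq_abs]
  exact mul_le_mul (hφM s) (hvδ s (Ioc_subset_Icc_self hs)) (norm_nonneg _)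
    ((abs_nonneg _).trans (hφM s))

section Periodic

variable {φ : ℝ → ℝ} {v : ℝ → F} {c M Λ V T : ℝ}

theorem norm_integral_nat_mul_smul_le_of_periodic (hc : 0 < c) (hΛ : 0 ≤ Λ) (hφm : Measurable φ)
    (hφM : ∀ s, |φ s| ≤ M) (hper : Function.Periodic φ c) (hφ0 : ∫ s in 0..c, φ s = 0)
    (hv : ContinuousOn v (Icc 0 T))
    (hvΛ : ∀ s ∈ Icc 0 T, ∀ s' ∈ Icc 0 T, ‖v s - v s'‖ ≤ Λ * |s - s'|) (n : ℕ) (hn : n * c ≤ T) :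
    ‖∫ s in 0..n * c, φ s • v s‖ ≤ M * (Λ * c) * (n * c) := by
  induction n with
  | zero => simp
  | succ n ih =>
    push_cast at hn ⊢
    rw [add_one_mul] at hn ⊢
    have hn₀ : 0 ≤ (n : ℝ) * c := by positivity
    have hsub : Icc 0 (n * c + c) ⊆ Icc 0 T := Icc_subset_Icc le_rfl hn
    have hint : ∀ a b, 0 ≤ a → a ≤ b → b ≤ n * c + c →
        IntervalIntegrable (fun s => φ s • v s) volume a b := fun a b ha hab hb =>
      (hφm.intervalIntegrable_of_abs_le hφM a b).smul_continuousOn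
        (hv.mono ((uIcc_of_le hab).trans_subset ((Icc_subset_Icc ha hb).trans hsub)))
    have hlast : ‖∫ s in n * c..n * c + c, φ s • v s‖ ≤ M * (Λ * c) * c := by
      have hwin : Icc (n * c) (n * c + c) ⊆ Icc 0 T := (Icc_subset_Icc hn₀ le_rfl).trans hsub
      have := norm_integral_smul_le_of_integral_eq_zero (le_add_of_nonneg_right hc.le)
        (hφm.intervalIntegrable_of_abs_le hφM _ _) hφM
        (by rw [hper.intervalIntegral_add_eq _ 0, zero_add, hφ0]) (hv.mono hwin)
        (δ := Λ * c) fun s hs => (hvΛ s (hwin hs) _ (hwin ⟨le_rfl, by linarith⟩)).trans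
          (by gcongr; rw [abs_of_nonneg] <;> linarith [hs.1, hs.2])
      rwa [add_sub_cancel_left] at this
    rw [← integral_add_adjacent_intervals (hint 0 _ le_rfl hn₀ (by linarith))
      (hint _ _ hn₀ (by linarith) le_rfl)]
    calc _ ≤ _ := norm_add_le _ _
      _ ≤ M * (Λ * c) * (n * c) + M * (Λ * c) * c := add_le_add (ih (by linarith)) hlast
      _ = M * (Λ * c) * (n * c + c) := by ring

theorem norm_integral_smul_le_of_periodic (hc : 0 < c) (hΛ : 0 ≤ Λ) (hφm : Measurable φ)
    (hφM : ∀ s, |φ s| ≤ M) (hper : Function.Periodic φ c) (hφ0 : ∫ s in 0..c, φ s = 0)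
    (hv : ContinuousOn v (Icc 0 T))
    (hvΛ : ∀ s ∈ Icc 0 T, ∀ s' ∈ Icc 0 T, ‖v s - v s'‖ ≤ Λ * |s - s'|)
    (hvV : ∀ s ∈ Icc 0 T, ‖v s‖ ≤ V) :
    ∀ w ∈ Icc 0 T, ‖∫ s in 0..w, φ s • v s‖ ≤ M * c * (Λ * w + V) := by
  intro w hw
  have hM : 0 ≤ M := (abs_nonneg _).trans (hφM 0)
  have hV : 0 ≤ V := (norm_nonneg _).trans (hvV w hw)
  set n := ⌊w / c⌋₊
  have hnw : n * c ≤ w := (le_div_iff₀ hc).1 (Nat.floor_le (div_nonneg hw.1 hc.le))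
  have hwn : w < n * c + c := by
    have := (div_lt_iff₀ hc).1 (Nat.lt_floor_add_one (w / c)); linarith
  have hn₀ : 0 ≤ (n : ℝ) * c := by positivity
  have hint : ∀ a b, 0 ≤ a → a ≤ b → b ≤ T → IntervalIntegrable (fun s => φ s • v s) volume a b :=
    fun a b ha hab hb => (hφm.intervalIntegrable_of_abs_le hφM a b).smul_continuousOn
      (hv.mono ((uIcc_of_le hab).trans_subset (Icc_subset_Icc ha hb)))
  have htail : ‖∫ s in n * c..w, φ s • v s‖ ≤ M * V * c := by
    refine (intervalIntegral.norm_integral_le_of_norm_le_const (C := M * V) fun s hs => ?_).trans ?_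
    · rw [uIoc_of_le hnw] at hs
      rw [norm_smul, Real.norm_eq_abs]
      exact mul_le_mul (hφM s) (hvV s ⟨hn₀.trans hs.1.le, hs.2.trans hw.2⟩) (norm_nonneg _) hM
    · rw [abs_of_nonneg (by linarith)]
      gcongr; linarith
  rw [← integral_add_adjacent_intervals (hint 0 _ le_rfl hn₀ (hnw.trans hw.2))
    (hint _ _ hn₀ hnw hw.2)]
  calc _ ≤ _ := norm_add_le _ _
    _ ≤ M * (Λ * c) * (n * c) + M * V * c :=
      add_le_add (norm_integral_nat_mul_smul_le_of_periodic hc hΛ hφm hφM hper hφ0 hv hvΛ n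
        (hnw.trans hw.2)) htail
    _ ≤ M * (Λ * c) * w + M * V * c := by gcongr
    _ = M * c * (Λ * w + V) := by ring

end Periodic

theorem norm_integral_sub_mean_smul_le {p : ℝ → ℝ} {y a v : ℝ → F}
    {P q T0 lam Λ V T : ℝ} (hT0 : 0 < T0) (hlam : 0 < lam) (hΛ : 0 ≤ Λ) (hp : ∀ t, |p t| ≤ P)
    (hper : Function.Periodic p T0) (hmean : (1 / T0) * ∫ τ in (0:ℝ)..T0, p τ = q)
    (ha : ContinuousOn a (Icc 0 T)) (hv : ContinuousOn v (Icc 0 T))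
    (hvΛ : ∀ s ∈ Icc 0 T, ∀ s' ∈ Icc 0 T, ‖v s - v s'‖ ≤ Λ * |s - s'|)
    (hvV : ∀ s ∈ Icc 0 T, ‖v s‖ ≤ V)
    (hy : ∀ s ∈ Icc 0 T, HasDerivAt y (a s + p (s / lam) • v s) s) :
    ∀ w ∈ Icc 0 T, ‖∫ s in 0..w, (p (s / lam) - q) • v s‖ ≤ 2 * P * (lam * T0) * (Λ * w + V) := by
  have hc : 0 < lam * T0 := mul_pos hlam hT0
  have hq : |q| ≤ P := abs_le_of_mean_eq hT0 hp hmean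
  have hφM : ∀ s, |p (s / lam) - q| ≤ 2 * P := fun s =>
    (abs_sub _ _).trans (by linarith [hp (s / lam)])
  by_cases hwin : ∃ a₀, Icc a₀ (a₀ + lam * T0) ⊆ Icc 0 T ∧
      ∀ s ∈ Icc a₀ (a₀ + lam * T0), v s ≠ 0
  · -- on a window where `v` does not vanish, `p` is recovered measurably from the equation
    obtain ⟨a₀, hsub, hv₀⟩ := hwin
    obtain ⟨r, hr, hpr⟩ := exists_measurable_eqOn_of_hasDerivAt_add_smul
      (le_add_of_nonneg_right hc.le) (ha.mono hsub) (hv.mono hsub) (fun s hs => hy s (hsub hs)) hv₀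
    have hperScaled : Function.Periodic (fun s => p (s / lam)) (lam * T0) := by
      rw [mul_comm]; exact hper.div_const lam
    have hpm : Measurable fun s => p (s / lam) :=
      hperScaled.measurable_of_eqOn hc hr (hpr.mono Ico_subset_Icc_self)
    have hpi := hpm.intervalIntegrable_of_abs_le (fun s => hp (s / lam)) 0 (lam * T0)
    have hφ0 : ∫ s in 0..lam * T0, (p (s / lam) - q) = 0 := by
      have hT0' : ∫ τ in (0:ℝ)..T0, p τ = q * T0 := by
        field_simp at hmean; linarith
      rw [integral_sub hpi intervalIntegrable_const, integral_comp_div (f := p) hlam.ne',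
        zero_div, mul_div_cancel_left₀ _ hlam.ne', hT0', intervalIntegral.integral_const,
        smul_eq_mul, smul_eq_mul]
      ring
    exact norm_integral_smul_le_of_periodic hc hΛ (hpm.sub_const q) hφM
      (fun s => by simp only [hperScaled s]) hφ0 hv hvΛ hvV
  · push Not at hwin
    exact norm_integral_smul_le_of_forall_exists_zero hΛ hc.le hφM hvΛ hvV hwin

end

open UniformSpace (Completion)

theorem HasDerivAt.completion_coe {E : Type*} [NormedAddCommGroup E] [NormedSpace ℝ E]
    {z : ℝ → E} {z' : E} {s : ℝ} (h : HasDerivAt z z' s) :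
    HasDerivAt (fun t => (z t : Completion E)) (z' : Completion E) s :=
  (Completion.toComplL : E →L[ℝ] Completion E).hasFDerivAt.comp_hasDerivAt s h

theorem ContinuousOn.completion_coe {E : Type*} [NormedAddCommGroup E] {z : ℝ → E} {S : Set ℝ}
    (h : ContinuousOn z S) : ContinuousOn (fun t => (z t : Completion E)) S :=
  (Completion.continuous_coe E).comp_continuousOn h

section

variable {E : Type*} [NormedAddCommGroup E] [NormedSpace ℝ E] {f : E → E} {Lf : NNReal}
  {B : E →L[ℝ] E} {b : ℝ}

theorem norm_add_smul_le (hf : LipschitzWith Lf f) (hB : ‖B‖ ≤ b) {P R r : ℝ} {y : E}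
    (hy : ‖y‖ ≤ R) (hr : |r| ≤ P) : ‖f y + r • B y‖ ≤ ‖f 0‖ + Lf * R + P * b * R := by
  have hfy : ‖f y‖ ≤ ‖f 0‖ + Lf * ‖y‖ := by
    simpa using (norm_le_norm_add_norm_sub' (f y) (f 0)).trans
      (add_le_add le_rfl (hf.norm_sub_le y 0))
  have hBy : ‖r • B y‖ ≤ P * (b * ‖y‖) := by
    rw [norm_smul, Real.norm_eq_abs]
    exact mul_le_mul hr (B.le_of_opNorm_le hB y) (norm_nonneg _) ((abs_nonneg r).trans hr)
  have hP : 0 ≤ P := (abs_nonneg r).trans hr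
  have hb : 0 ≤ b := (norm_nonneg B).trans hB
  calc ‖f y + r • B y‖ ≤ ‖f 0‖ + Lf * ‖y‖ + P * (b * ‖y‖) :=
        (norm_add_le _ _).trans (add_le_add hfy hBy)
    _ ≤ ‖f 0‖ + Lf * R + P * b * R := by
      rw [← mul_assoc]; gcongr

theorem norm_sub_add_smul_sub_le (hf : LipschitzWith Lf f) (hB : ‖B‖ ≤ b) {P r : ℝ} {y z : E}
    (hr : |r| ≤ P) : ‖f y - f z + r • (B y - B z)‖ ≤ (Lf + P * b) * ‖y - z‖ := by
  have hBy : ‖r • (B y - B z)‖ ≤ P * (b * ‖y - z‖) := by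
    rw [norm_smul, Real.norm_eq_abs, ← map_sub]
    exact mul_le_mul hr (B.le_of_opNorm_le hB _) (norm_nonneg _) ((abs_nonneg r).trans hr)
  calc _ ≤ Lf * ‖y - z‖ + P * (b * ‖y - z‖) :=
        (norm_add_le _ _).trans (add_le_add (hf.norm_sub_le y z) hBy)
    _ = (Lf + P * b) * ‖y - z‖ := by ring

theorem norm_sub_le_of_hasDerivAt_add_smul (hf : LipschitzWith Lf f) (hB : ‖B‖ ≤ b)
    {r : ℝ → ℝ} {y : ℝ → E} {P R T : ℝ} (hr : ∀ s, |r s| ≤ P)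
    (hy : ∀ s ∈ Icc 0 T, HasDerivAt y (f (y s) + r s • B (y s)) s)
    (hyR : ∀ s ∈ Icc 0 T, ‖y s‖ ≤ R) :
    ∀ s ∈ Icc 0 T, ∀ s' ∈ Icc 0 T, ‖y s - y s'‖ ≤ (‖f 0‖ + Lf * R + P * b * R) * |s - s'| :=
  fun s hs s' hs' => by
    simpa only [Real.norm_eq_abs] using
      (convex_Icc 0 T).norm_image_sub_le_of_norm_hasDerivWithin_le
        (fun u hu => (hy u hu).hasDerivWithinAt)
        (fun u hu => norm_add_smul_le hf hB (hyR u hu) (hr u)) hs' hs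

variable {p : ℝ → ℝ} {P R T T0 q lam : ℝ} {x xl : ℝ → E}

theorem norm_integral_forcing_sub_mean_le (hf : LipschitzWith Lf f) (hB : ‖B‖ ≤ b)
    (hT0 : 0 < T0) (hlam : 0 < lam) (hp : ∀ t, |p t| ≤ P) (hper : Function.Periodic p T0)
    (hmean : (1 / T0) * ∫ τ in (0:ℝ)..T0, p τ = q)
    (hxl : ∀ t ∈ Icc 0 T, HasDerivAt xl (f (xl t) + p (t / lam) • B (xl t)) t)
    (hxlR : ∀ t ∈ Icc 0 T, ‖xl t‖ ≤ R) (hR : 0 ≤ R) :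
    ∀ w ∈ Icc 0 T, ‖∫ s in 0..w, (p (s / lam) - q) • (B (xl s) : Completion E)‖ ≤
      2 * P * (lam * T0) * (b * (‖f 0‖ + Lf * R + P * b * R) * w + b * R) := by
  have hP : 0 ≤ P := (abs_nonneg _).trans (hp 0)
  have hb : 0 ≤ b := (norm_nonneg _).trans hB
  have hxlc : ContinuousOn xl (Icc 0 T) := fun s hs => (hxl s hs).continuousAt.continuousWithinAt
  have hxlM := norm_sub_le_of_hasDerivAt_add_smul hf hB (fun s => hp (s / lam)) hxl hxlR
  refine norm_integral_sub_mean_smul_le (y := fun s => (xl s : Completion E))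
    (a := fun s => (f (xl s) : Completion E)) hT0 hlam
    (by positivity) hp hper hmean
    (hf.continuous.comp_continuousOn hxlc).completion_coe
    (B.continuous.comp_continuousOn hxlc).completion_coe (fun s hs s' hs' => ?_)
    (fun s hs => ?_) fun s hs => ?_
  · rw [← Completion.coe_sub, Completion.norm_coe, ← map_sub, mul_assoc]
    exact B.le_of_opNorm_le hB _ |>.trans (by gcongr; exact hxlM s hs s' hs')
  · rw [Completion.norm_coe]
    exact (B.le_of_opNorm_le hB _).trans (by gcongr; exact hxlR s hs)
  · simpa only [Completion.coe_add, Completion.coe_smul] using (hxl s hs).completion_coe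

theorem averaging_error_le (hf : LipschitzWith Lf f) (hB : ‖B‖ ≤ b) (hT0 : 0 < T0)
    (hlam : 0 < lam) (hp : ∀ t, |p t| ≤ P) (hper : Function.Periodic p T0)
    (hmean : (1 / T0) * ∫ τ in (0:ℝ)..T0, p τ = q)
    (hx : ∀ t ∈ Icc 0 T, HasDerivAt x (f (x t) + q • B (x t)) t) (hxl0 : xl 0 = x 0)
    (hxl : ∀ t ∈ Icc 0 T, HasDerivAt xl (f (xl t) + p (t / lam) • B (xl t)) t)
    (hxlR : ∀ t ∈ Icc 0 T, ‖xl t‖ ≤ R) (hR : 0 ≤ R) (t : ℝ) (ht : t ∈ Icc 0 T) :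
    ‖xl t - x t‖ ≤ 2 * P * T0 * (b * (‖f 0‖ + Lf * R + P * b * R) * T + b * R) *
      exp ((Lf + P * b) * T) * lam := by
  have hP : 0 ≤ P := (abs_nonneg _).trans (hp 0)
  have hb : 0 ≤ b := (norm_nonneg _).trans hB
  have hT : 0 ≤ T := ht.1.trans ht.2
  have hq : |q| ≤ P := abs_le_of_mean_eq hT0 hp hmean
  have hxlc : ContinuousOn xl (Icc 0 T) := fun s hs => (hxl s hs).continuousAt.continuousWithinAt
  have hxc : ContinuousOn x (Icc 0 T) := fun s hs => (hx s hs).continuousAt.continuousWithinAt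
  -- Bochner integrals need a complete space: compare the two solutions in the completion of `E`.
  have hgron := norm_le_mul_exp_of_hasDerivAt_add
    (u := fun s => (xl s : Completion E) - x s)
    (a := fun s => ((f (xl s) - f (x s) + q • (B (xl s) - B (x s)) : E) : Completion E))
    (g := fun s => (p (s / lam) - q) • (B (xl s) : Completion E)) (K := Lf + P * b)
    (G := 2 * P * (b * R))
    (ε := 2 * P * (lam * T0) * (b * (‖f 0‖ + Lf * R + P * b * R) * T + b * R))
    (by positivity) (by simp [hxl0])
    (fun s hs => by
      convert (hxl s hs).completion_coe.fun_sub (hx s hs).completion_coe using 1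
      simp only [Completion.coe_add, Completion.coe_sub, Completion.coe_smul]
      module)
    (((hf.continuous.comp_continuousOn hxlc).sub (hf.continuous.comp_continuousOn hxc)).add
      (((B.continuous.comp_continuousOn hxlc).sub
        (B.continuous.comp_continuousOn hxc)).const_smul q)).completion_coe
    (fun s _ => by
      rw [Completion.norm_coe, ← Completion.coe_sub, Completion.norm_coe]
      exact norm_sub_add_smul_sub_le hf hB hq)
    (fun s hs => by
      rw [norm_smul, Completion.norm_coe, Real.norm_eq_abs]
      exact mul_le_mul ((abs_sub _ _).trans (by linarith [hp (s / lam)]))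
        ((B.le_of_opNorm_le hB _).trans (by gcongr; exact hxlR s hs)) (norm_nonneg _)
        (by positivity))
    (fun w hw => (norm_integral_forcing_sub_mean_le hf hB hT0 hlam hp hper hmean hxl hxlR hR w
      hw).trans (by gcongr; exact hw.2)) t ht
  rw [← Completion.norm_coe, Completion.coe_sub]
  calc _ ≤ _ := hgron
    _ ≤ 2 * P * (lam * T0) * (b * (‖f 0‖ + Lf * R + P * b * R) * T + b * R) *
        exp ((Lf + P * b) * T) := by gcongr; exact ht.2
    _ = _ := by ring

end

theorem stmt_17 {E : Type*} [NormedAddCommGroup E] [NormedSpace ℝ E]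
    (L b Pbar R T T0 q : ℝ) (hT0 : 0 < T0) (hT : 0 < T)
    (f : E → E) (hf : LipschitzWith (Real.toNNReal L) f)
    (B : E →L[ℝ] E) (hB : ‖B‖ ≤ b)
    (p : ℝ → ℝ) (hp : ∀ t, |p t| ≤ Pbar) (hper : Function.Periodic p T0)
    (hmean : (1 / T0) * ∫ τ in (0:ℝ)..T0, p τ = q)
    (x : ℝ → E)
    (hx : ∀ t ∈ Set.Icc (0:ℝ) T, HasDerivAt x (f (x t) + q • B (x t)) t)
    (hxR : ∀ t ∈ Set.Icc (0:ℝ) T, ‖x t‖ ≤ R) :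
    ∃ C > (0:ℝ), ∀ lam > (0:ℝ), ∀ xl : ℝ → E, xl 0 = x 0 →
      (∀ t ∈ Set.Icc (0:ℝ) T, HasDerivAt xl (f (xl t) + p (t / lam) • B (xl t)) t) →
      (∀ t ∈ Set.Icc (0:ℝ) T, ‖xl t‖ ≤ R) →
      ∀ t ∈ Set.Icc (0:ℝ) T, ‖xl t - x t‖ ≤ C * lam := by
  have hR : 0 ≤ R := (norm_nonneg _).trans (hxR 0 ⟨le_rfl, hT.le⟩)
  have hP : 0 ≤ Pbar := (abs_nonneg _).trans (hp 0)
  have hb : 0 ≤ b := (norm_nonneg _).trans hB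
  refine ⟨2 * Pbar * T0 * (b * (‖f 0‖ + L.toNNReal * R + Pbar * b * R) * T + b * R) *
    exp ((L.toNNReal + Pbar * b) * T) + 1, by positivity, ?_⟩
  intro lam hlam xl hxl0 hxl hxlR t ht
  refine (averaging_error_le hf hB hT0 hlam hp hper hmean hx hxl0 hxl hxlR hR t ht).trans ?_
  gcongr
  linarith
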